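/- Let 𝛄 = (γ_1,γ_2,…) ∈ (0,∞)^ℕ be a non-increasing sequence of weights and 𝛂 = (α_1,α_2,…) ∈ (1,∞)^ℕ with inf_j α_j > 1. Consider for each d the Hermite space 𝓗_{𝐩_{𝛂,𝛄}} over ℝ^d built from the first d entries of 𝛂 and 𝛄. (1) If ∑_{j=1}^∞ γ_j < ∞, then multivariate integration in these spaces is strongly polynomially tractable: there is a constant c such that n_min(ε,d) ≤ c ε^{−2} for all d ∈ ℕ and ε ∈ (0,1). (2) If limsup_{d→∞} (∑_{j=1}^d γ_j)/ln(d) < ∞, then integration is polynomially tractable: there are constants c, q ≥ 0 with n_min(ε,d) ≤ c d^q ε^{−2} for all d ∈ ℕ and ε ∈ (0,1). -/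

import Mathlib

open MeasureTheory Real Filter Asymptotics

noncomputable section

/-- Standard Gaussian density on `ℝ^d`. -/
def gaussD (d : ℕ) (x : Fin d → ℝ) : ℝ :=
  (2 * π) ^ (-(d : ℝ) / 2) * Real.exp (-(∑ i, (x i) ^ 2) / 2)

/-- Normalized (probabilists') Hermite polynomial `H_k`. -/
def Hnorm (k : ℕ) (x : ℝ) : ℝ :=
  (Polynomial.aeval x (Polynomial.hermite k)) / Real.sqrt (Nat.factorial k)

/-- Multivariate Hermite polynomial indexed by a multi-index. -/
def Hmulti {d : ℕ} (k : Fin d → ℕ) (x : Fin d → ℝ) : ℝ :=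
  ∏ j, Hnorm (k j) (x j)

/-- Gaussian square-integrability. -/
def GaussianSqInt {d : ℕ} (f : (Fin d → ℝ) → ℝ) : Prop :=
  MeasureTheory.Integrable (fun x => (f x) ^ 2 * gaussD d x)

/-- `k`-th Hermite coefficient of `f`. -/
def hCoeff {d : ℕ} (f : (Fin d → ℝ) → ℝ) (k : Fin d → ℕ) : ℝ :=
  ∫ x, f x * Hmulti k x * gaussD d x

/-- Membership in the Hermite space `𝓗_r`. -/
def memHermite {d : ℕ} (r : (Fin d → ℕ) → ℝ) (f : (Fin d → ℝ) → ℝ) : Prop :=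
  Continuous f ∧ GaussianSqInt f ∧
    Summable (fun k : Fin d → ℕ => (r k)⁻¹ * (hCoeff f k) ^ 2)

/-- Squared Hermite-space norm `‖f‖_r²`. -/
def hNormSq {d : ℕ} (r : (Fin d → ℕ) → ℝ) (f : (Fin d → ℝ) → ℝ) : ℝ :=
  ∑' k : Fin d → ℕ, (r k)⁻¹ * (hCoeff f k) ^ 2

/-- Gaussian integral `I(f)`. -/
def qmcInt {d : ℕ} (f : (Fin d → ℝ) → ℝ) : ℝ := ∫ x, f x * gaussD d x

/-- QMC rule `Q_{n,d}(f,P)`. -/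
def qmcRule {d n : ℕ} (f : (Fin d → ℝ) → ℝ) (P : Fin n → Fin d → ℝ) : ℝ :=
  (1 / (n : ℝ)) * ∑ i, f (P i)

/-- Worst-case error of QMC integration in `𝓗_r` with point set `P`. -/
def wce (d n : ℕ) (r : (Fin d → ℕ) → ℝ) (P : Fin n → Fin d → ℝ) : ℝ :=
  sSup {e : ℝ | ∃ f : (Fin d → ℝ) → ℝ,
    memHermite r f ∧ hNormSq r f ≤ 1 ∧ e = |qmcInt f - qmcRule f P|}

/-- Information complexity of QMC integration in `𝓗_r`. -/
def nmin (d : ℕ) (r : (Fin d → ℕ) → ℝ) (ε : ℝ) : ℕ :=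
  sInf {n : ℕ | 0 < n ∧ ∃ P : Fin n → Fin d → ℝ, wce d n r P ≤ ε}

/-- The weight `p_{α,γ}` with polynomial decay. -/
def pweight (α γ : ℝ) (k : ℕ) : ℝ := if k = 0 then 1 else γ * (k : ℝ) ^ (-α)

/-- Product weight `𝐩_{𝛂,𝛄}`. -/
def pweights {d : ℕ} (α γ : Fin d → ℝ) (k : Fin d → ℕ) : ℝ :=
  ∏ j, pweight (α j) (γ j) (k j)

/-- The weight `ε_{ω,γ}` with exponential decay. -/
def eweight (ω γ : ℝ) (k : ℕ) : ℝ := if k = 0 then 1 else γ * ω ^ k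

/-- Product weight `𝛆_{𝛚,𝛄}`. -/
def eweights {d : ℕ} (ω γ : Fin d → ℝ) (k : Fin d → ℕ) : ℝ :=
  ∏ j, eweight (ω j) (γ j) (k j)

/-!
Stein's identity `E[Q'] = E[X Q]` for the standard Gaussian and the recursion
`He_{k+1} = X He_k - He_k'` give `E[P He_k] = E[P^{(k)}]`, hence the orthonormality of the
normalized Hermite polynomials, univariate and then multivariate.

For `f` in the unit ball of `𝓗_r`, split `f` into a finite Hermite sum plus a tail. By
Cauchy–Schwarz the QMC error of the sum is at most `√(∑_𝐤 r(𝐤) err(H_𝐤)²)`. If the worst-case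
error is some finite `s`, homogeneity bounds the error of the tail by `s` times its norm, and the
norm of the tail tends to `0`; this avoids any completeness property of the Hermite system.

Averaging `∑_𝐤 r(𝐤) err(H_𝐤)²` over i.i.d. Gaussian points gives `∑_{𝐤 ≠ 0} r(𝐤) / n`, so some
point set does at least as well. For product weights,
`∑_𝐤 𝐩(𝐤) ≤ ∏_j (1 + γ_j ζ(a)) ≤ exp(ζ(a) ∑_j γ_j)`, which is bounded in `d` if `∑ γ_j < ∞`
and polynomial in `d` if `∑_{j<d} γ_j = O(log d)`.
-/

open Polynomial ProbabilityTheory Nat Topology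
open scoped ENNReal

section GaussianExpectation

lemma gaussianPDFReal_zero_one (x : ℝ) :
    gaussianPDFReal 0 1 x = (√(2 * π))⁻¹ * rexp (-x ^ 2 / 2) := by
  simp [gaussianPDFReal]

lemma hasDerivAt_gaussianPDFReal_zero_one (x : ℝ) :
    HasDerivAt (gaussianPDFReal 0 1) (-x * gaussianPDFReal 0 1 x) x := by
  simp_rw [funext gaussianPDFReal_zero_one]
  refine ((((hasDerivAt_pow 2 x).neg.div_const 2).exp).const_mul _).congr_deriv ?_
  simp only [Pi.neg_apply]
  push_cast
  ring

lemma integrable_eval_mul_gaussianPDFReal (Q : ℝ[X]) :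
    Integrable fun x => Q.eval x * gaussianPDFReal 0 1 x := by
  simp_rw [eval_eq_sum_range, Finset.sum_mul]
  refine integrable_finsetSum _ fun i _ => ?_
  have hmoment := integrable_rpow_mul_exp_neg_mul_sq (b := 1 / 2) (by norm_num) (s := i)
    (neg_one_lt_zero.trans_le i.cast_nonneg)
  refine (hmoment.const_mul (Q.coeff i * (√(2 * π))⁻¹)).congr (ae_of_all _ fun x => ?_)
  simp only [gaussianPDFReal_zero_one, Real.rpow_natCast]
  ring_nf

def gaussianExpectation : ℝ[X] →ₗ[ℝ] ℝ where
  toFun Q := ∫ x, Q.eval x * gaussianPDFReal 0 1 x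
  map_add' P Q := by
    simp only [eval_add, add_mul]
    exact integral_add (integrable_eval_mul_gaussianPDFReal P)
      (integrable_eval_mul_gaussianPDFReal Q)
  map_smul' c Q := by
    simp only [eval_smul, smul_eq_mul, mul_assoc, RingHom.id_apply]
    exact integral_const_mul c _

lemma gaussianExpectation_apply (Q : ℝ[X]) :
    gaussianExpectation Q = ∫ x, Q.eval x * gaussianPDFReal 0 1 x := rfl

lemma gaussianExpectation_C (c : ℝ) : gaussianExpectation (C c) = c := by
  simp [gaussianExpectation_apply, integral_const_mul, integral_gaussianPDFReal_eq_one]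

lemma gaussianExpectation_derivative (Q : ℝ[X]) :
    gaussianExpectation (derivative Q) = gaussianExpectation (X * Q) := by
  rw [← sub_eq_zero, ← map_sub]
  refine integral_eq_zero_of_hasDerivAt_of_integrable
    (f := fun x => Q.eval x * gaussianPDFReal 0 1 x) (fun x => ?_)
    (integrable_eval_mul_gaussianPDFReal _) (integrable_eval_mul_gaussianPDFReal Q)
  refine ((Q.hasDerivAt x).mul (hasDerivAt_gaussianPDFReal_zero_one x)).congr_deriv ?_
  simp only [eval_sub, eval_mul, eval_X]
  ring

def hermiteR (k : ℕ) : ℝ[X] := (hermite k).map (Int.castRingHom ℝ)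

lemma hermiteR_succ (k : ℕ) :
    hermiteR (k + 1) = X * hermiteR k - derivative (hermiteR k) := by
  simp [hermiteR, hermite_succ, derivative_map]

lemma natDegree_hermiteR (k : ℕ) : (hermiteR k).natDegree = k := by
  rw [hermiteR, (hermite_monic k).natDegree_map, natDegree_hermite]

lemma iterate_derivative_hermiteR_self (k : ℕ) :
    derivative^[k] (hermiteR k) = C (k ! : ℝ) := by
  rw [eq_C_of_natDegree_le_zero ((natDegree_iterate_derivative _ k).trans
    (by rw [natDegree_hermiteR, Nat.sub_self])), coeff_iterate_derivative, zero_add,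
    Nat.descFactorial_self, hermiteR, coeff_map, coeff_hermite_self]
  simp

lemma gaussianExpectation_mul_hermiteR (P : ℝ[X]) (k : ℕ) :
    gaussianExpectation (P * hermiteR k) = gaussianExpectation (derivative^[k] P) := by
  induction k generalizing P with
  | zero => simp [hermiteR]
  | succ k ih =>
    have stein := gaussianExpectation_derivative (P * hermiteR k)
    rw [Function.iterate_succ_apply, ← ih, hermiteR_succ, mul_sub, map_sub, ← mul_assoc,
      mul_comm P X, mul_assoc, ← stein, derivative_mul, map_add]
    ring

lemma gaussianExpectation_hermiteR_mul_hermiteR_of_lt {j k : ℕ} (hjk : j < k) :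
    gaussianExpectation (hermiteR j * hermiteR k) = 0 := by
  rw [gaussianExpectation_mul_hermiteR,
    iterate_derivative_eq_zero (by rwa [natDegree_hermiteR]), map_zero]

lemma gaussianExpectation_hermiteR_mul_hermiteR (j k : ℕ) :
    gaussianExpectation (hermiteR j * hermiteR k) = if j = k then (k ! : ℝ) else 0 := by
  rcases lt_trichotomy j k with hjk | rfl | hkj
  · rw [gaussianExpectation_hermiteR_mul_hermiteR_of_lt hjk, if_neg hjk.ne]
  · rw [gaussianExpectation_mul_hermiteR, iterate_derivative_hermiteR_self,
      gaussianExpectation_C, if_pos rfl]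
  · rw [mul_comm, gaussianExpectation_hermiteR_mul_hermiteR_of_lt hkj, if_neg hkj.ne']

lemma Hnorm_eq_eval (k : ℕ) (x : ℝ) :
    Hnorm k x = (C (√(k ! : ℝ))⁻¹ * hermiteR k).eval x := by
  rw [Hnorm, eval_mul, eval_C, hermiteR, eval_map, ← algebraMap_int_eq, ← aeval_def,
    div_eq_inv_mul]

lemma Hnorm_zero (x : ℝ) : Hnorm 0 x = 1 := by
  simp [Hnorm]

@[fun_prop]
lemma continuous_Hnorm (k : ℕ) : Continuous (Hnorm k) := by
  simp_rw [funext (Hnorm_eq_eval k)]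
  exact Polynomial.continuous _

lemma integrable_Hnorm_mul_Hnorm_mul_gaussianPDFReal (j k : ℕ) :
    Integrable fun x => Hnorm j x * Hnorm k x * gaussianPDFReal 0 1 x := by
  simpa only [Hnorm_eq_eval, eval_mul] using integrable_eval_mul_gaussianPDFReal
    ((C (√(j ! : ℝ))⁻¹ * hermiteR j) * (C (√(k ! : ℝ))⁻¹ * hermiteR k))

lemma integral_Hnorm_mul_Hnorm_mul_gaussianPDFReal (j k : ℕ) :
    ∫ x, Hnorm j x * Hnorm k x * gaussianPDFReal 0 1 x = if j = k then 1 else 0 := by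
  have hpoly : (C (√(j ! : ℝ))⁻¹ * hermiteR j) * (C (√(k ! : ℝ))⁻¹ * hermiteR k)
      = ((√(j ! : ℝ))⁻¹ * (√(k ! : ℝ))⁻¹) • (hermiteR j * hermiteR k) := by
    rw [smul_eq_C_mul, C_mul]
    ring
  simp_rw [Hnorm_eq_eval, ← eval_mul, ← gaussianExpectation_apply, hpoly, map_smul,
    gaussianExpectation_hermiteR_mul_hermiteR, smul_eq_mul]
  split_ifs with hjk
  · subst hjk
    rw [← mul_inv, Real.mul_self_sqrt (by positivity), inv_mul_cancel₀ (by positivity)]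
  · rw [mul_zero]

end GaussianExpectation

section MultivariateHermite

variable {d : ℕ}

lemma gaussD_eq_prod (x : Fin d → ℝ) : gaussD d x = ∏ i, gaussianPDFReal 0 1 (x i) := by
  simp_rw [gaussianPDFReal_zero_one]
  rw [Finset.prod_mul_distrib, ← Real.exp_sum, gaussD, Finset.prod_const,
    Finset.card_univ, Fintype.card_fin, neg_div, ← Finset.sum_div, Finset.sum_neg_distrib]
  congr 1
  rw [Real.sqrt_eq_rpow, ← Real.rpow_neg (by positivity), ← Real.rpow_natCast,
    ← Real.rpow_mul (by positivity)]
  ring_nf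

lemma gaussD_pos (x : Fin d → ℝ) : 0 < gaussD d x := by
  rw [gaussD_eq_prod]
  exact Finset.prod_pos fun i _ => gaussianPDFReal_pos _ _ _ one_ne_zero

@[fun_prop]
lemma continuous_gaussD : Continuous (gaussD d) := by
  unfold gaussD
  fun_prop

@[fun_prop]
lemma continuous_Hmulti (k : Fin d → ℕ) : Continuous (Hmulti k) := by
  unfold Hmulti
  fun_prop

@[simp]
lemma Hmulti_zero (x : Fin d → ℝ) : Hmulti (0 : Fin d → ℕ) x = 1 := by
  simp [Hmulti, Hnorm_zero]

lemma Hmulti_mul_Hmulti_mul_gaussD (k l : Fin d → ℕ) (x : Fin d → ℝ) :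
    Hmulti k x * Hmulti l x * gaussD d x
      = ∏ i, Hnorm (k i) (x i) * Hnorm (l i) (x i) * gaussianPDFReal 0 1 (x i) := by
  rw [gaussD_eq_prod, Hmulti, Hmulti, ← Finset.prod_mul_distrib, ← Finset.prod_mul_distrib]

lemma integrable_Hmulti_mul_Hmulti_mul_gaussD (k l : Fin d → ℕ) :
    Integrable fun x => Hmulti k x * Hmulti l x * gaussD d x := by
  simp_rw [Hmulti_mul_Hmulti_mul_gaussD]
  exact Integrable.fintype_prod
    (f := fun i t => Hnorm (k i) t * Hnorm (l i) t * gaussianPDFReal 0 1 t)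
    fun i => integrable_Hnorm_mul_Hnorm_mul_gaussianPDFReal _ _

lemma integral_Hmulti_mul_Hmulti_mul_gaussD (k l : Fin d → ℕ) :
    ∫ x, Hmulti k x * Hmulti l x * gaussD d x = if k = l then 1 else 0 := by
  simp_rw [Hmulti_mul_Hmulti_mul_gaussD]
  rw [integral_fintype_prod_volume_eq_prod
    (f := fun i t => Hnorm (k i) t * Hnorm (l i) t * gaussianPDFReal 0 1 t)]
  simp_rw [integral_Hnorm_mul_Hnorm_mul_gaussianPDFReal, Finset.prod_ite_zero, funext_iff]
  simp

lemma integrable_Hmulti_mul_gaussD (k : Fin d → ℕ) :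
    Integrable fun x => Hmulti k x * gaussD d x := by
  simpa using integrable_Hmulti_mul_Hmulti_mul_gaussD k 0

lemma integral_Hmulti_mul_gaussD (k : Fin d → ℕ) :
    ∫ x, Hmulti k x * gaussD d x = if k = 0 then 1 else 0 := by
  simpa using integral_Hmulti_mul_Hmulti_mul_gaussD k 0

lemma integrable_gaussD : Integrable (gaussD d) := by
  simpa using integrable_Hmulti_mul_gaussD (0 : Fin d → ℕ)

lemma integral_gaussD : ∫ x, gaussD d x = 1 := by
  simpa using integral_Hmulti_mul_gaussD (0 : Fin d → ℕ)

end MultivariateHermite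

section HermiteCoefficients

variable {d : ℕ} {f g : (Fin d → ℝ) → ℝ}

lemma GaussianSqInt.integrable_mul (hfc : Continuous f) (hgc : Continuous g)
    (hf : GaussianSqInt f) (hg : GaussianSqInt g) :
    Integrable fun x => f x * g x * gaussD d x := by
  refine ((Integrable.add hf hg).div_const 2).mono' (by fun_prop) (ae_of_all _ fun x => ?_)
  have hρ := (gaussD_pos x).le
  have amgm := two_mul_le_add_sq |f x| |g x|
  rw [sq_abs, sq_abs] at amgm
  rw [Real.norm_eq_abs, abs_mul, abs_of_nonneg hρ, abs_mul, Pi.add_apply]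
  nlinarith [mul_le_mul_of_nonneg_right amgm hρ]

lemma GaussianSqInt.const_mul (hf : GaussianSqInt f) (c : ℝ) :
    GaussianSqInt fun x => c * f x := by
  simpa only [GaussianSqInt, mul_pow, mul_assoc] using Integrable.const_mul hf (c ^ 2)

lemma GaussianSqInt.add (hfc : Continuous f) (hgc : Continuous g)
    (hf : GaussianSqInt f) (hg : GaussianSqInt g) :
    GaussianSqInt fun x => f x + g x := by
  refine ((Integrable.add hf hg).add ((hf.integrable_mul hfc hgc hg).const_mul 2)).congr
    (ae_of_all _ fun x => ?_)
  simp only [Pi.add_apply]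
  ring

lemma GaussianSqInt.sub (hfc : Continuous f) (hgc : Continuous g)
    (hf : GaussianSqInt f) (hg : GaussianSqInt g) :
    GaussianSqInt fun x => f x - g x := by
  simpa only [neg_one_mul, ← sub_eq_add_neg] using
    hf.add hfc (by fun_prop) (hg.const_mul (-1))

lemma gaussianSqInt_Hmulti (k : Fin d → ℕ) : GaussianSqInt (Hmulti k) := by
  simpa only [GaussianSqInt, sq] using integrable_Hmulti_mul_Hmulti_mul_gaussD k k

lemma hCoeff_zero_eq_qmcInt (f : (Fin d → ℝ) → ℝ) : hCoeff f 0 = qmcInt f := by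
  simp [hCoeff, qmcInt]

lemma hCoeff_const_mul (c : ℝ) (f : (Fin d → ℝ) → ℝ) (k : Fin d → ℕ) :
    hCoeff (fun x => c * f x) k = c * hCoeff f k := by
  simp only [hCoeff, mul_assoc, integral_const_mul]

lemma hCoeff_sub (hfc : Continuous f) (hgc : Continuous g)
    (hf : GaussianSqInt f) (hg : GaussianSqInt g) (k : Fin d → ℕ) :
    hCoeff (fun x => f x - g x) k = hCoeff f k - hCoeff g k := by
  simp only [hCoeff, sub_mul]
  exact integral_sub (hf.integrable_mul hfc (continuous_Hmulti k) (gaussianSqInt_Hmulti k))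
    (hg.integrable_mul hgc (continuous_Hmulti k) (gaussianSqInt_Hmulti k))

lemma memHermite_const_mul {r : (Fin d → ℕ) → ℝ} (hf : memHermite r f) (c : ℝ) :
    memHermite r (fun x => c * f x) ∧ hNormSq r (fun x => c * f x) = c ^ 2 * hNormSq r f := by
  have hterm : ∀ k, (r k)⁻¹ * hCoeff (fun x => c * f x) k ^ 2
      = c ^ 2 * ((r k)⁻¹ * hCoeff f k ^ 2) := fun k => by
    rw [hCoeff_const_mul]
    ring
  refine ⟨⟨continuous_const.mul hf.1, hf.2.1.const_mul c, ?_⟩, ?_⟩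
  · simpa only [hterm] using hf.2.2.mul_left (c ^ 2)
  · simp only [hNormSq, hterm, tsum_mul_left]

end HermiteCoefficients

section QMCError

variable {d n : ℕ}

def qmcError (f : (Fin d → ℝ) → ℝ) (P : Fin n → Fin d → ℝ) : ℝ := qmcInt f - qmcRule f P

def hermiteSum (F : Finset (Fin d → ℕ)) (a : (Fin d → ℕ) → ℝ) (x : Fin d → ℝ) : ℝ :=
  ∑ l ∈ F, a l * Hmulti l x

def hermiteDiscrepancySq (r : (Fin d → ℕ) → ℝ) (P : Fin n → Fin d → ℝ) : ℝ :=
  ∑' k, r k * qmcError (Hmulti k) P ^ 2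

lemma qmcError_const_mul (c : ℝ) (f : (Fin d → ℝ) → ℝ) (P : Fin n → Fin d → ℝ) :
    qmcError (fun x => c * f x) P = c * qmcError f P := by
  simp only [qmcError, qmcInt, qmcRule, mul_assoc, integral_const_mul, ← Finset.mul_sum]
  ring

lemma qmcError_sub {f g : (Fin d → ℝ) → ℝ} (hfc : Continuous f) (hgc : Continuous g)
    (hf : GaussianSqInt f) (hg : GaussianSqInt g) (P : Fin n → Fin d → ℝ) :
    qmcError (fun x => f x - g x) P = qmcError f P - qmcError g P := by
  simp only [qmcError, ← hCoeff_zero_eq_qmcInt, hCoeff_sub hfc hgc hf hg, qmcRule,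
    Finset.sum_sub_distrib]
  ring

@[fun_prop]
lemma continuous_hermiteSum (F : Finset (Fin d → ℕ)) (a : (Fin d → ℕ) → ℝ) :
    Continuous (hermiteSum F a) := by
  unfold hermiteSum
  fun_prop

lemma gaussianSqInt_hermiteSum (F : Finset (Fin d → ℕ)) (a : (Fin d → ℕ) → ℝ) :
    GaussianSqInt (hermiteSum F a) := by
  classical
  induction F using Finset.induction_on with
  | empty => simp [GaussianSqInt, hermiteSum]
  | insert l F hl ih =>
    have hsum : hermiteSum (insert l F) a = fun x => a l * Hmulti l x + hermiteSum F a x :=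
      funext fun x => Finset.sum_insert hl
    rw [hsum]
    exact ((gaussianSqInt_Hmulti l).const_mul (a l)).add (by fun_prop)
      (continuous_hermiteSum F a) ih

lemma hCoeff_hermiteSum (F : Finset (Fin d → ℕ)) (a : (Fin d → ℕ) → ℝ) (k : Fin d → ℕ) :
    hCoeff (hermiteSum F a) k = if k ∈ F then a k else 0 := by
  have hsum : ∀ x, hermiteSum F a x * Hmulti k x * gaussD d x
      = ∑ l ∈ F, a l * (Hmulti l x * Hmulti k x * gaussD d x) := fun x => by
    simp only [hermiteSum, Finset.sum_mul, mul_assoc]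
  simp only [hCoeff, hsum]
  rw [integral_finsetSum _ fun l _ => (integrable_Hmulti_mul_Hmulti_mul_gaussD l k).const_mul _]
  simp only [integral_const_mul, integral_Hmulti_mul_Hmulti_mul_gaussD, mul_ite, mul_one,
    mul_zero, Finset.sum_ite_eq']

lemma qmcError_hermiteSum (F : Finset (Fin d → ℕ)) (a : (Fin d → ℕ) → ℝ)
    (P : Fin n → Fin d → ℝ) :
    qmcError (hermiteSum F a) P = ∑ l ∈ F, a l * qmcError (Hmulti l) P := by
  have hInt : ∀ l : Fin d → ℕ, qmcInt (Hmulti l) = if l = 0 then 1 else 0 :=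
    integral_Hmulti_mul_gaussD
  rw [qmcError, ← hCoeff_zero_eq_qmcInt, hCoeff_hermiteSum]
  simp only [qmcError, hInt, mul_sub, Finset.sum_sub_distrib, mul_ite, mul_one, mul_zero,
    Finset.sum_ite_eq', qmcRule, hermiteSum, Finset.mul_sum]
  rw [Finset.sum_comm]
  simp only [mul_left_comm]

end QMCError

section WorstCaseError

variable {d n : ℕ} {r : (Fin d → ℕ) → ℝ} {f : (Fin d → ℝ) → ℝ} {P : Fin n → Fin d → ℝ}

lemma le_mul_sqrt_of_forall_sq_mul_le_one {a s t : ℝ} (ha : 0 ≤ a) (ht : 0 ≤ t)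
    (h : ∀ c : ℝ, c ^ 2 * t ≤ 1 → |c| * a ≤ s) : a ≤ s * √t := by
  rcases ht.eq_or_lt with rfl | ht
  · rcases ha.eq_or_lt with rfl | ha
    · simp
    · have := h ((|s| + 1) / a) (by simp)
      rw [abs_of_pos (by positivity), div_mul_cancel₀ _ ha.ne'] at this
      linarith [le_abs_self s]
  · have hst := Real.sqrt_pos.2 ht
    have := h (√t)⁻¹ (by rw [inv_pow, Real.sq_sqrt ht.le, inv_mul_cancel₀ ht.ne'])
    rw [abs_of_pos (inv_pos.2 hst), inv_mul_le_iff₀ hst] at this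
    linarith

lemma hNormSq_nonneg (hr : ∀ k, 0 ≤ r k) (f : (Fin d → ℝ) → ℝ) : 0 ≤ hNormSq r f :=
  tsum_nonneg fun k => mul_nonneg (inv_nonneg.2 (hr k)) (sq_nonneg _)

lemma abs_qmcError_le_mul_sqrt_hNormSq (hr : ∀ k, 0 ≤ r k) {s : ℝ}
    (hs : ∀ g, memHermite r g → hNormSq r g ≤ 1 → |qmcError g P| ≤ s)
    (hf : memHermite r f) :
    |qmcError f P| ≤ s * √(hNormSq r f) :=
  le_mul_sqrt_of_forall_sq_mul_le_one (abs_nonneg _) (hNormSq_nonneg hr f) fun c hc => by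
    obtain ⟨hmem, hnorm⟩ := memHermite_const_mul hf c
    simpa only [qmcError_const_mul, abs_mul] using hs _ hmem (hnorm ▸ hc)

lemma hCoeff_sub_hermiteSum (hfc : Continuous f) (hf : GaussianSqInt f)
    (F : Finset (Fin d → ℕ)) (k : Fin d → ℕ) :
    hCoeff (fun x => f x - hermiteSum F (hCoeff f) x) k = if k ∈ F then 0 else hCoeff f k := by
  rw [hCoeff_sub hfc (continuous_hermiteSum F _) hf (gaussianSqInt_hermiteSum F _),
    hCoeff_hermiteSum]
  split_ifs <;> simp

lemma memHermite_sub_hermiteSum (hf : memHermite r f) (F : Finset (Fin d → ℕ)) :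
    memHermite r (fun x => f x - hermiteSum F (hCoeff f) x)
      ∧ hNormSq r (fun x => f x - hermiteSum F (hCoeff f) x)
        = ∑' k : {k // k ∉ F}, (r k)⁻¹ * hCoeff f k ^ 2 := by
  have hterm : (fun k => (r k)⁻¹ * hCoeff (fun x => f x - hermiteSum F (hCoeff f) x) k ^ 2)
      = {k | k ∉ F}.indicator fun k => (r k)⁻¹ * hCoeff f k ^ 2 := by
    ext k
    by_cases hk : k ∈ F <;> simp [hCoeff_sub_hermiteSum hf.1 hf.2.1, hk]
  refine ⟨⟨hf.1.sub (continuous_hermiteSum F _),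
    hf.2.1.sub hf.1 (continuous_hermiteSum F _) (gaussianSqInt_hermiteSum F _), ?_⟩, ?_⟩
  · rw [hterm]
    exact hf.2.2.indicator _
  · rw [hNormSq, hterm, ← tsum_subtype]
    rfl

lemma abs_qmcError_hermiteSum_le (hr : ∀ k, 0 < r k) (hf : memHermite r f)
    (hdisc : Summable fun k => r k * qmcError (Hmulti k) P ^ 2) (F : Finset (Fin d → ℕ)) :
    |qmcError (hermiteSum F (hCoeff f)) P|
      ≤ √(hNormSq r f) * √(hermiteDiscrepancySq r P) := by
  have hcoef : ∀ k, 0 ≤ (r k)⁻¹ * hCoeff f k ^ 2 :=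
    fun k => mul_nonneg (inv_nonneg.2 (hr k).le) (sq_nonneg _)
  have herr : ∀ k, 0 ≤ r k * qmcError (Hmulti k) P ^ 2 :=
    fun k => mul_nonneg (hr k).le (sq_nonneg _)
  rw [qmcError_hermiteSum, ← Real.sqrt_sq_eq_abs,
    ← Real.sqrt_mul (hNormSq_nonneg (fun k => (hr k).le) f)]
  refine Real.sqrt_le_sqrt ?_
  calc (∑ l ∈ F, hCoeff f l * qmcError (Hmulti l) P) ^ 2
      ≤ (∑ l ∈ F, (r l)⁻¹ * hCoeff f l ^ 2) * ∑ l ∈ F, r l * qmcError (Hmulti l) P ^ 2 :=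
        Finset.sum_sq_le_sum_mul_sum_of_sq_le_mul F (fun l _ => hcoef l) (fun l _ => herr l)
          fun l _ => by rw [mul_mul_mul_comm, inv_mul_cancel₀ (hr l).ne', one_mul, mul_pow]
    _ ≤ hNormSq r f * hermiteDiscrepancySq r P :=
        mul_le_mul (hf.2.2.sum_le_tsum F fun k _ => hcoef k)
          (hdisc.sum_le_tsum F fun k _ => herr k) (Finset.sum_nonneg fun l _ => herr l)
          (hNormSq_nonneg (fun k => (hr k).le) f)

lemma abs_qmcError_le_add_tail (hr : ∀ k, 0 < r k)
    (hdisc : Summable fun k => r k * qmcError (Hmulti k) P ^ 2) {s : ℝ}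
    (hs : ∀ g, memHermite r g → hNormSq r g ≤ 1 → |qmcError g P| ≤ s)
    (hf : memHermite r f) (hnorm : hNormSq r f ≤ 1) (F : Finset (Fin d → ℕ)) :
    |qmcError f P| ≤ √(hermiteDiscrepancySq r P)
      + s * √(∑' k : {k // k ∉ F}, (r k)⁻¹ * hCoeff f k ^ 2) := by
  obtain ⟨htail, htail_norm⟩ := memHermite_sub_hermiteSum hf F
  have hsplit := qmcError_sub hf.1 (continuous_hermiteSum F (hCoeff f)) hf.2.1
    (gaussianSqInt_hermiteSum F (hCoeff f)) P
  have hhead : |qmcError (hermiteSum F (hCoeff f)) P| ≤ √(hermiteDiscrepancySq r P) :=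
    (abs_qmcError_hermiteSum_le hr hf hdisc F).trans
      (mul_le_of_le_one_left (Real.sqrt_nonneg _) (Real.sqrt_le_one.mpr hnorm))
  have htail_err := abs_qmcError_le_mul_sqrt_hNormSq (fun k => (hr k).le) hs htail
  rw [htail_norm] at htail_err
  calc |qmcError f P|
      = |qmcError (hermiteSum F (hCoeff f)) P
          + qmcError (fun x => f x - hermiteSum F (hCoeff f) x) P| := by
        rw [hsplit, add_sub_cancel]
    _ ≤ _ := (abs_add_le _ _).trans (add_le_add hhead htail_err)

lemma abs_qmcError_le_sqrt_hermiteDiscrepancySq (hr : ∀ k, 0 < r k)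
    (hdisc : Summable fun k => r k * qmcError (Hmulti k) P ^ 2) {s : ℝ}
    (hs : ∀ g, memHermite r g → hNormSq r g ≤ 1 → |qmcError g P| ≤ s)
    (hf : memHermite r f) (hnorm : hNormSq r f ≤ 1) :
    |qmcError f P| ≤ √(hermiteDiscrepancySq r P) := by
  have htail := tendsto_tsum_compl_atTop_zero fun k => (r k)⁻¹ * hCoeff f k ^ 2
  have hlim : Tendsto (fun F : Finset (Fin d → ℕ) => √(hermiteDiscrepancySq r P)
      + s * √(∑' k : {k // k ∉ F}, (r k)⁻¹ * hCoeff f k ^ 2)) atTop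
      (𝓝 (√(hermiteDiscrepancySq r P) + s * √0)) :=
    tendsto_const_nhds.add (tendsto_const_nhds.mul ((Real.continuous_sqrt.tendsto 0).comp htail))
  rw [Real.sqrt_zero, mul_zero, add_zero] at hlim
  exact ge_of_tendsto hlim (.of_forall (abs_qmcError_le_add_tail hr hdisc hs hf hnorm))

lemma wce_le_sqrt_hermiteDiscrepancySq (hr : ∀ k, 0 < r k)
    (hdisc : Summable fun k => r k * qmcError (Hmulti k) P ^ 2) :
    wce d n r P ≤ √(hermiteDiscrepancySq r P) := by
  -- `sSup` of a set that is not bounded above is `0`.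
  by_cases hbdd : BddAbove
      {e : ℝ | ∃ f, memHermite r f ∧ hNormSq r f ≤ 1 ∧ e = |qmcInt f - qmcRule f P|}
  · refine Real.sSup_le ?_ (Real.sqrt_nonneg _)
    rintro _ ⟨f, hf, hnorm, rfl⟩
    exact abs_qmcError_le_sqrt_hermiteDiscrepancySq hr hdisc
      (fun g hg hgn => le_csSup hbdd ⟨g, hg, hgn, rfl⟩) hf hnorm
  · rw [wce, Real.sSup_of_not_bddAbove hbdd]
    exact Real.sqrt_nonneg _

end WorstCaseError

section SampleMean

variable {α : Type*} [MeasureSpace α] [SigmaFinite (volume : Measure α)] {n : ℕ}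
  {ρ u : α → ℝ}

lemma integral_mul_mul_prod_density (hρ : Integrable ρ) (hρ1 : ∫ x, ρ x = 1)
    (hu : Integrable fun x => u x * ρ x) (hu0 : ∫ x, u x * ρ x = 0)
    (huu : Integrable fun x => u x * u x * ρ x) (huu1 : ∫ x, u x * u x * ρ x = 1)
    (i j : Fin n) :
    Integrable (fun P : Fin n → α => u (P i) * u (P j) * ∏ m, ρ (P m))
      ∧ ∫ P : Fin n → α, u (P i) * u (P j) * ∏ m, ρ (P m) = if i = j then 1 else 0 := by
  classical
  let F : Fin n → α → ℝ := fun m y =>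
    (if m = i then u y else 1) * (if m = j then u y else 1) * ρ y
  have hprod : ∀ P : Fin n → α, u (P i) * u (P j) * ∏ m, ρ (P m) = ∏ m, F m (P m) :=
    fun P => by
      simp only [F, Finset.prod_mul_distrib, Finset.prod_ite_eq', Finset.mem_univ, if_true]
  have hFint : ∀ m, Integrable (F m) := fun m => by
    rcases eq_or_ne m i with rfl | hi <;> rcases eq_or_ne m j with rfl | hj <;> simp_all [F]
  simp only [hprod]
  refine ⟨Integrable.fintype_prod (f := F) hFint, ?_⟩
  rw [integral_fintype_prod_volume_eq_prod (f := F)]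
  split_ifs with hij
  · subst hij
    refine Finset.prod_eq_one fun m _ => ?_
    rcases eq_or_ne m i with rfl | hi <;> simp_all [F]
  · refine Finset.prod_eq_zero (Finset.mem_univ i) ?_
    simpa only [F, if_true, hij, if_false, mul_one] using hu0

lemma integral_sampleMean_sq_mul_prod_density (hρ : Integrable ρ) (hρ1 : ∫ x, ρ x = 1)
    (hu : Integrable fun x => u x * ρ x) (hu0 : ∫ x, u x * ρ x = 0)
    (huu : Integrable fun x => u x * u x * ρ x) (huu1 : ∫ x, u x * u x * ρ x = 1) :
    Integrable (fun P : Fin n → α => ((1 / n : ℝ) * ∑ i, u (P i)) ^ 2 * ∏ m, ρ (P m))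
      ∧ ∫ P : Fin n → α, ((1 / n : ℝ) * ∑ i, u (P i)) ^ 2 * ∏ m, ρ (P m) = 1 / n := by
  have hpair := integral_mul_mul_prod_density (n := n) hρ hρ1 hu hu0 huu huu1
  have hexpand : ∀ P : Fin n → α, ((1 / n : ℝ) * ∑ i, u (P i)) ^ 2 * ∏ m, ρ (P m)
      = (1 / n : ℝ) ^ 2 * ∑ i, ∑ j, u (P i) * u (P j) * ∏ m, ρ (P m) := fun P => by
    rw [mul_pow, sq (∑ i, u (P i)), Finset.sum_mul_sum, mul_assoc, Finset.sum_mul]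
    simp only [Finset.sum_mul]
  simp only [hexpand]
  have hint : ∀ i, Integrable fun P : Fin n → α => ∑ j, u (P i) * u (P j) * ∏ m, ρ (P m) :=
    fun i => integrable_finsetSum _ fun j _ => (hpair i j).1
  refine ⟨(integrable_finsetSum _ fun i _ => hint i).const_mul _, ?_⟩
  rw [integral_const_mul, integral_finsetSum _ fun i _ => hint i]
  simp only [integral_finsetSum _ fun j _ => (hpair _ j).1, (hpair _ _).2, Finset.sum_ite_eq,
    Finset.mem_univ, if_true, Finset.sum_const, Finset.card_univ, Fintype.card_fin,
    nsmul_eq_mul, mul_one]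
  field_simp

end SampleMean

section Averaging

lemma exists_le_lintegral_mul_density {α : Type*} [MeasurableSpace α] {μ : Measure α}
    {ρ : α → ℝ} (hρ : Measurable ρ) (hρ1 : ∫⁻ x, ENNReal.ofReal (ρ x) ∂μ = 1)
    {Φ : α → ℝ≥0∞} (hΦ : Measurable Φ) :
    ∃ x, Φ x ≤ ∫⁻ x, Φ x * ENNReal.ofReal (ρ x) ∂μ := by
  let ν := μ.withDensity fun x => ENNReal.ofReal (ρ x)
  have : IsProbabilityMeasure ν := ⟨by simp [ν, hρ1]⟩
  obtain ⟨x, hx⟩ := exists_le_lintegral (μ := ν) hΦ.aemeasurable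
  refine ⟨x, hx.trans_eq ?_⟩
  rw [lintegral_withDensity_eq_lintegral_mul _ hρ.ennreal_ofReal hΦ]
  simp only [Pi.mul_apply, mul_comm]

lemma summable_and_tsum_le_of_tsum_ofReal_le {ι : Type*} {q : ι → ℝ} (hq : ∀ i, 0 ≤ q i)
    {B : ℝ} (hB : 0 ≤ B) (h : ∑' i, ENNReal.ofReal (q i) ≤ ENNReal.ofReal B) :
    Summable q ∧ ∑' i, q i ≤ B := by
  have hs : Summable q := by
    simpa only [ENNReal.toReal_ofReal (hq _)] using
      ENNReal.summable_toReal (ne_top_of_le_ne_top ENNReal.ofReal_ne_top h)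
  rw [← ENNReal.ofReal_tsum_of_nonneg hq hs, ENNReal.ofReal_le_ofReal_iff hB] at h
  exact ⟨hs, h⟩

variable {d n : ℕ}

@[fun_prop]
lemma continuous_qmcError_Hmulti (k : Fin d → ℕ) :
    Continuous fun P : Fin n → Fin d → ℝ => qmcError (Hmulti k) P := by
  unfold qmcError qmcRule
  fun_prop

lemma qmcError_Hmulti (hn : 0 < n) (k : Fin d → ℕ) (P : Fin n → Fin d → ℝ) :
    qmcError (Hmulti k) P = if k = 0 then 0 else -qmcRule (Hmulti k) P := by
  rw [qmcError, qmcInt, integral_Hmulti_mul_gaussD]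
  split_ifs with hk
  · subst hk
    simp [qmcRule, hn.ne']
  · ring

lemma integral_qmcError_Hmulti_sq (hn : 0 < n) (k : Fin d → ℕ) :
    Integrable (fun P : Fin n → Fin d → ℝ => qmcError (Hmulti k) P ^ 2 * ∏ m, gaussD d (P m))
      ∧ ∫ P : Fin n → Fin d → ℝ, qmcError (Hmulti k) P ^ 2 * ∏ m, gaussD d (P m)
        = if k = 0 then 0 else 1 / (n : ℝ) := by
  simp only [qmcError_Hmulti hn]
  split_ifs with hk
  · simp
  · simp only [neg_sq, qmcRule]
    exact integral_sampleMean_sq_mul_prod_density integrable_gaussD integral_gaussD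
      (integrable_Hmulti_mul_gaussD k) (by rw [integral_Hmulti_mul_gaussD, if_neg hk])
      (integrable_Hmulti_mul_Hmulti_mul_gaussD k k)
      (by rw [integral_Hmulti_mul_Hmulti_mul_gaussD, if_pos rfl])

lemma lintegral_prod_gaussD :
    ∫⁻ P : Fin n → Fin d → ℝ, ENNReal.ofReal (∏ m, gaussD d (P m)) = 1 := by
  have hint : Integrable fun P : Fin n → Fin d → ℝ => ∏ m, gaussD d (P m) :=
    Integrable.fintype_prod (f := fun _ => gaussD d) fun _ => integrable_gaussD
  rw [← ofReal_integral_eq_lintegral_ofReal hint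
      (ae_of_all _ fun P => Finset.prod_nonneg fun m _ => (gaussD_pos (P m)).le),
    integral_fintype_prod_volume_eq_prod (f := fun _ => gaussD d)]
  simp [integral_gaussD]

lemma exists_hermiteDiscrepancySq_le (hn : 0 < n) {r : (Fin d → ℕ) → ℝ} (hr : ∀ k, 0 ≤ r k)
    (hsum : Summable r) :
    ∃ P : Fin n → Fin d → ℝ, Summable (fun k => r k * qmcError (Hmulti k) P ^ 2)
      ∧ hermiteDiscrepancySq r P ≤ (∑' k, r k - r 0) / n := by
  set v : (Fin d → ℕ) → ℝ := fun k => (if k = 0 then 0 else r k) / n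
  have hv : ∀ k, 0 ≤ v k := fun k => div_nonneg (by split_ifs <;> simp [hr]) n.cast_nonneg
  have hv_summable : Summable v := (Summable.of_nonneg_of_le
    (fun k => by split_ifs <;> simp [hr]) (fun k => by split_ifs <;> simp [hr]) hsum).div_const _
  have hv_sum : ∑' k, v k = (∑' k, r k - r 0) / n := by
    rw [tsum_div_const, hsum.tsum_eq_add_tsum_ite 0, add_sub_cancel_left]
  have hterm : ∀ k, ∫⁻ P : Fin n → Fin d → ℝ,
      ENNReal.ofReal (r k * qmcError (Hmulti k) P ^ 2) * ENNReal.ofReal (∏ m, gaussD d (P m))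
        = ENNReal.ofReal (v k) := fun k => by
    obtain ⟨hint, hval⟩ := integral_qmcError_Hmulti_sq (n := n) hn k
    simp only [← ENNReal.ofReal_mul (mul_nonneg (hr k) (sq_nonneg _)), mul_assoc]
    rw [← ofReal_integral_eq_lintegral_ofReal (hint.const_mul (r k))
      (ae_of_all _ fun P => mul_nonneg (hr k) (mul_nonneg (sq_nonneg _)
        (Finset.prod_nonneg fun m _ => (gaussD_pos (P m)).le))), integral_const_mul, hval]
    split_ifs <;> simp [v, *, div_eq_mul_inv]
  have hmeas : ∀ k, Measurable fun P : Fin n → Fin d → ℝ =>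
      ENNReal.ofReal (r k * qmcError (Hmulti k) P ^ 2) := fun k => by fun_prop
  obtain ⟨P, hP⟩ := exists_le_lintegral_mul_density (by fun_prop) lintegral_prod_gaussD
    (Measurable.tsum (L := .unconditional _) hmeas)
  have hmean : ∫⁻ P : Fin n → Fin d → ℝ,
      (∑' k, ENNReal.ofReal (r k * qmcError (Hmulti k) P ^ 2))
        * ENNReal.ofReal (∏ m, gaussD d (P m)) = ENNReal.ofReal ((∑' k, r k - r 0) / n) := by
    simp_rw [← ENNReal.tsum_mul_right]
    rw [lintegral_tsum fun k => by fun_prop, tsum_congr hterm,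
      ← ENNReal.ofReal_tsum_of_nonneg hv hv_summable, hv_sum]
  rw [hmean] at hP
  exact ⟨P, summable_and_tsum_le_of_tsum_ofReal_le (fun k => mul_nonneg (hr k) (sq_nonneg _))
    (hv_sum ▸ tsum_nonneg hv) hP⟩

end Averaging

section Weights

lemma summable_prod_apply_and_tsum_le {ι β : Type*} [Fintype ι]
    {w : ι → β → ℝ} (hw0 : ∀ j b, 0 ≤ w j b) (hw : ∀ j, Summable (w j)) :
    Summable (fun k : ι → β => ∏ j, w j (k j))
      ∧ ∑' k : ι → β, ∏ j, w j (k j) ≤ ∏ j, ∑' b, w j b := by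
  have hnonneg : 0 ≤ fun k : ι → β => ∏ j, w j (k j) :=
    fun k => Finset.prod_nonneg fun j _ => hw0 j (k j)
  have hpartial : ∀ S : Finset (ι → β), ∑ k ∈ S, ∏ j, w j (k j) ≤ ∏ j, ∑' b, w j b :=
    fun S => by
      classical
      calc ∑ k ∈ S, ∏ j, w j (k j)
          ≤ ∑ k ∈ Fintype.piFinset fun j => S.image (· j), ∏ j, w j (k j) :=
            Finset.sum_le_sum_of_subset_of_nonneg
              (fun k hk => Fintype.mem_piFinset.2 fun j => Finset.mem_image_of_mem _ hk)
              fun k _ _ => hnonneg k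
        _ = ∏ j, ∑ b ∈ S.image (· j), w j b := (Finset.prod_univ_sum _ _).symm
        _ ≤ ∏ j, ∑' b, w j b :=
            Finset.prod_le_prod (fun j _ => Finset.sum_nonneg fun b _ => hw0 j b)
              fun j _ => (hw j).sum_le_tsum _ fun b _ => hw0 j b
  exact ⟨summable_of_sum_le hnonneg hpartial, tsum_le_of_sum_le hnonneg hpartial⟩

variable {a α γ : ℝ}

lemma pweight_nonneg (hγ : 0 ≤ γ) (k : ℕ) : 0 ≤ pweight α γ k := by
  unfold pweight
  split_ifs
  · exact zero_le_one
  · positivity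

lemma pweight_pos (hγ : 0 < γ) (k : ℕ) : 0 < pweight α γ k := by
  unfold pweight
  split_ifs
  · exact one_pos
  · positivity

lemma pweight_le (hγ : 0 ≤ γ) (haα : a ≤ α) (k : ℕ) :
    pweight α γ k ≤ (if k = 0 then 1 else 0) + γ * (k : ℝ) ^ (-a) := by
  unfold pweight
  split_ifs with hk
  · simpa [hk] using mul_nonneg hγ (Real.rpow_nonneg le_rfl _)
  · rw [zero_add]
    exact mul_le_mul_of_nonneg_left (Real.rpow_le_rpow_of_exponent_le
      (by exact_mod_cast Nat.one_le_iff_ne_zero.2 hk) (neg_le_neg haα)) hγ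

lemma summable_pweight_and_tsum_le (ha : 1 < a) (hγ : 0 ≤ γ) (haα : a ≤ α) :
    Summable (pweight α γ) ∧ ∑' k, pweight α γ k ≤ 1 + γ * ∑' k : ℕ, (k : ℝ) ^ (-a) := by
  have hζ : Summable fun k : ℕ => (k : ℝ) ^ (-a) := Real.summable_nat_rpow.2 (by linarith)
  have hδ : Summable fun k : ℕ => if k = 0 then (1 : ℝ) else 0 :=
    summable_of_ne_finset_zero (s := {0}) (by simp)
  have hbound := hδ.add (hζ.mul_left γ)
  have hs := Summable.of_nonneg_of_le (pweight_nonneg hγ) (pweight_le hγ haα) hbound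
  refine ⟨hs, (hs.tsum_le_tsum (pweight_le hγ haα) hbound).trans_eq ?_⟩
  rw [hδ.tsum_add (hζ.mul_left γ), tsum_mul_left, tsum_ite_eq]

lemma summable_pweights_and_tsum_le {d : ℕ} {αd γd : Fin d → ℝ} (ha : 1 < a)
    (hγ : ∀ j, 0 ≤ γd j) (hα : ∀ j, a ≤ αd j) :
    Summable (pweights αd γd)
      ∧ ∑' k, pweights αd γd k ≤ rexp ((∑' k : ℕ, (k : ℝ) ^ (-a)) * ∑ j, γd j) := by
  set Z := ∑' k : ℕ, (k : ℝ) ^ (-a)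
  have hZ : 0 ≤ Z := tsum_nonneg fun k => Real.rpow_nonneg k.cast_nonneg _
  have hj := fun j => summable_pweight_and_tsum_le ha (hγ j) (hα j)
  obtain ⟨hs, hle⟩ := summable_prod_apply_and_tsum_le (fun j => pweight_nonneg (hγ j))
    fun j => (hj j).1
  refine ⟨hs, hle.trans ?_⟩
  calc ∏ j, ∑' k, pweight (αd j) (γd j) k
      ≤ ∏ j, rexp (γd j * Z) :=
        Finset.prod_le_prod (fun j _ => tsum_nonneg (pweight_nonneg (hγ j))) fun j _ =>
          (hj j).2.trans (by linarith [Real.add_one_le_exp (γd j * Z), mul_comm Z (γd j)])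
    _ = rexp (Z * ∑ j, γd j) := by
      rw [← Real.exp_sum, Finset.mul_sum]
      simp only [mul_comm]

end Weights

section Complexity

variable {d : ℕ}

lemma nmin_le_of_summable {r : (Fin d → ℕ) → ℝ} (hr : ∀ k, 0 < r k) (hsum : Summable r)
    {ε : ℝ} (hε : 0 < ε) : (nmin d r ε : ℝ) ≤ (∑' k, r k - r 0) / ε ^ 2 + 1 := by
  set B := ∑' k, r k - r 0
  have hB : 0 ≤ B := sub_nonneg.2 (hsum.le_tsum 0 fun k _ => (hr k).le)
  set n := ⌊B / ε ^ 2⌋₊ + 1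
  have hn : 0 < n := Nat.succ_pos _
  have hBn : B / n ≤ ε ^ 2 := by
    rw [div_le_iff₀ (by positivity), mul_comm, ← div_le_iff₀ (by positivity)]
    simpa [n] using (Nat.lt_floor_add_one (B / ε ^ 2)).le
  obtain ⟨P, hdisc, hP⟩ := exists_hermiteDiscrepancySq_le hn (fun k => (hr k).le) hsum
  have hwce : wce d n r P ≤ ε :=
    (wce_le_sqrt_hermiteDiscrepancySq hr hdisc).trans
      ((Real.sqrt_le_sqrt (hP.trans hBn)).trans_eq (Real.sqrt_sq hε.le))
  have hmem : n ∈ {m : ℕ | 0 < m ∧ ∃ P : Fin m → Fin d → ℝ, wce d m r P ≤ ε} := ⟨hn, P, hwce⟩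
  calc (nmin d r ε : ℝ) ≤ n := by exact_mod_cast Nat.sInf_le hmem
    _ ≤ B / ε ^ 2 + 1 := by
      push_cast [n]
      gcongr
      exact Nat.floor_le (by positivity)

lemma nmin_pweights_le {a : ℝ} (ha : 1 < a) {αd γd : Fin d → ℝ} (hγ : ∀ j, 0 < γd j)
    (hα : ∀ j, a ≤ αd j) {ε : ℝ} (hε : ε ∈ Set.Ioo (0 : ℝ) 1) :
    (nmin d (pweights αd γd) ε : ℝ)
      ≤ rexp ((∑' k : ℕ, (k : ℝ) ^ (-a)) * ∑ j, γd j) * ε⁻¹ ^ 2 := by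
  obtain ⟨hs, hle⟩ := summable_pweights_and_tsum_le ha (fun j => (hγ j).le) hα
  have hpos : ∀ k, 0 < pweights αd γd k :=
    fun k => Finset.prod_pos fun j _ => pweight_pos (hγ j) _
  have hzero : pweights αd γd 0 = 1 := by simp [pweights, pweight]
  have hε1 : 1 ≤ ε⁻¹ ^ 2 := one_le_pow₀ ((one_le_inv₀ hε.1).2 hε.2.le)
  calc (nmin d (pweights αd γd) ε : ℝ)
      ≤ (∑' k, pweights αd γd k - 1) * ε⁻¹ ^ 2 + 1 := by
        simpa [hzero, div_eq_mul_inv] using nmin_le_of_summable hpos hs hε.1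
    _ ≤ (∑' k, pweights αd γd k - 1) * ε⁻¹ ^ 2 + ε⁻¹ ^ 2 := by gcongr
    _ ≤ _ := by nlinarith

end Complexity

lemma sum_range_le_add_mul_log {γ : ℕ → ℝ} (hγ : ∀ j, 0 ≤ γ j) {A : ℝ} {D : ℕ}
    (hD : ∀ d ≥ D, ∑ j ∈ Finset.range d, γ j ≤ A * Real.log d) {d : ℕ} (hd : 0 < d) :
    ∑ j ∈ Finset.range d, γ j ≤ ∑ j ∈ Finset.range D, γ j + max A 0 * Real.log d := by
  have hlog : 0 ≤ Real.log d := Real.log_nonneg (by exact_mod_cast hd)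
  rcases le_total D d with hDd | hdD
  · have hS0 : 0 ≤ ∑ j ∈ Finset.range D, γ j := Finset.sum_nonneg fun j _ => hγ j
    nlinarith [hD d hDd, mul_le_mul_of_nonneg_right (le_max_left A 0) hlog]
  · have := Finset.sum_le_sum_of_subset_of_nonneg (Finset.range_subset_range.2 hdD)
      fun j _ _ => hγ j
    nlinarith [mul_nonneg (le_max_right A 0) hlog]

theorem stmt13_general (γ α : ℕ → ℝ)
    (hγpos : ∀ j, 0 < γ j)
    (hα : ∃ a : ℝ, 1 < a ∧ ∀ j, a ≤ α j) :
    (Summable γ →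
      ∃ c : ℝ, ∀ d : ℕ, 0 < d → ∀ ε : ℝ, ε ∈ Set.Ioo (0 : ℝ) 1 →
        ((nmin d (pweights (fun j : Fin d => α j) (fun j : Fin d => γ j)) ε : ℝ)
          ≤ c * ε⁻¹ ^ 2)) ∧
    ((∃ A : ℝ, ∀ᶠ d : ℕ in atTop, (∑ j ∈ Finset.range d, γ j) ≤ A * Real.log d) →
      ∃ c q : ℝ, ∀ d : ℕ, 0 < d → ∀ ε : ℝ, ε ∈ Set.Ioo (0 : ℝ) 1 →
        ((nmin d (pweights (fun j : Fin d => α j) (fun j : Fin d => γ j)) ε : ℝ)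
          ≤ c * (d : ℝ) ^ q * ε⁻¹ ^ 2)) := by
  obtain ⟨a, ha, haα⟩ := hα
  set Z := ∑' k : ℕ, (k : ℝ) ^ (-a)
  have hZ : 0 ≤ Z := tsum_nonneg fun k => Real.rpow_nonneg k.cast_nonneg _
  have hbound : ∀ d : ℕ, ∀ ε ∈ Set.Ioo (0 : ℝ) 1,
      (nmin d (pweights (fun j : Fin d => α j) (fun j : Fin d => γ j)) ε : ℝ)
        ≤ rexp (Z * ∑ j ∈ Finset.range d, γ j) * ε⁻¹ ^ 2 := fun d ε hε => by
    rw [← Fin.sum_univ_eq_sum_range]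
    exact nmin_pweights_le ha (fun j => hγpos j) (fun j => haα j) hε
  refine ⟨fun hγsum => ⟨rexp (Z * ∑' j, γ j), fun d _ ε hε => (hbound d ε hε).trans ?_⟩, ?_⟩
  · gcongr
    exact hγsum.sum_le_tsum _ fun j _ => (hγpos j).le
  · rintro ⟨A, hA⟩
    obtain ⟨D, hD⟩ := eventually_atTop.1 hA
    refine ⟨rexp (Z * ∑ j ∈ Finset.range D, γ j), Z * max A 0,
      fun d hd ε hε => (hbound d ε hε).trans ?_⟩
    rw [Real.rpow_def_of_pos (by exact_mod_cast hd), ← Real.exp_add]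
    gcongr
    nlinarith [sum_range_le_add_mul_log (fun j => (hγpos j).le) hD hd]

/-- sufficient conditions for (strong) polynomial tractability of multivariate
integration in the Hermite spaces `𝓗_{𝐩_{𝛂,𝛄}}` with polynomially decaying coefficients. -/
theorem stmt13 (γ α : ℕ → ℝ)
    (hγpos : ∀ j, 0 < γ j) (hγmono : ∀ i j, i ≤ j → γ j ≤ γ i)
    (hα : ∃ a : ℝ, 1 < a ∧ ∀ j, a ≤ α j) :
    (Summable γ →
      ∃ c : ℝ, ∀ d : ℕ, 0 < d → ∀ ε : ℝ, ε ∈ Set.Ioo (0 : ℝ) 1 →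
        ((nmin d (pweights (fun j : Fin d => α j) (fun j : Fin d => γ j)) ε : ℝ)
          ≤ c * ε⁻¹ ^ 2)) ∧
    ((∃ A : ℝ, ∀ᶠ d : ℕ in atTop, (∑ j ∈ Finset.range d, γ j) ≤ A * Real.log d) →
      ∃ c q : ℝ, ∀ d : ℕ, 0 < d → ∀ ε : ℝ, ε ∈ Set.Ioo (0 : ℝ) 1 →
        ((nmin d (pweights (fun j : Fin d => α j) (fun j : Fin d => γ j)) ε : ℝ)
          ≤ c * (d : ℝ) ^ q * ε⁻¹ ^ 2)) :=
  stmt13_general γ α hγpos hα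

end
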